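/- Let J be a real n×n matrix. Then every complex eigenvalue of J has strictly negative real part if and only if for every v ∈ ℝⁿ the trajectory exp(tJ)·v converges to 0 as t → ∞. -/

import Mathlib

/-!
Over `ℂ` the space `ℂ^ι` is spanned by generalized eigenvectors. If `(A - μ)^k w = 0`, the
exponential series of `t (A - μ)` applied to `w` terminates, so
`exp (t A) w = e^{tμ} ∑_{j<k} t^j/j! (A - μ)^j w`, which tends to `0` when `Re μ < 0`.
Conversely, on an eigenvector `exp (t A) w = e^{tμ} w` has norm `e^{t Re μ} ‖w‖`, which does not
tend to `0` when `Re μ ≥ 0`. A real matrix has decaying trajectories on `ℝ^ι` iff its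
complexification has decaying trajectories on `ℂ^ι`: split complex vectors into real and
imaginary parts.
-/

open NormedSpace Filter Matrix Topology
open scoped Nat

theorem tendsto_cexp_mul_mul_pow_atTop {μ : ℂ} (hμ : μ.re < 0) (j : ℕ) :
    Tendsto (fun t : ℝ => Complex.exp (t * μ) * (t : ℂ) ^ j) atTop (𝓝 0) := by
  rw [tendsto_zero_iff_norm_tendsto_zero]
  refine ((isLittleO_pow_exp_pos_mul_atTop j (neg_pos.2 hμ)).tendsto_div_nhds_zero).congr' ?_
  filter_upwards [eventually_ge_atTop 0] with t ht
  rw [norm_mul, Complex.norm_exp, Complex.re_ofReal_mul, norm_pow, Complex.norm_real,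
    Real.norm_of_nonneg ht, div_eq_mul_inv, ← Real.exp_neg]
  ring_nf

theorem Pi.ofReal_re_add_I_smul_ofReal_im {ι : Type*} (w : ι → ℂ) :
    ((fun i => ((w i).re : ℂ)) + Complex.I • fun i => ((w i).im : ℂ)) = w :=
  funext fun i => by simpa [mul_comm] using Complex.re_add_im (w i)

namespace Matrix

variable {ι : Type*} [Fintype ι]

section Complexification

open Complex

theorem map_ofReal_mulVec {κ : Type*} (M : Matrix κ ι ℝ) (v : ι → ℝ) :
    (M.map ofReal *ᵥ fun j => (v j : ℂ)) = fun i => ((M *ᵥ v) i : ℂ) :=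
  funext fun i => (RingHom.map_mulVec ofRealHom M v i).symm

theorem forall_tendsto_mulVec_iff_forall_tendsto_map_ofReal_mulVec {α : Type*} {l : Filter α}
    (M : α → Matrix ι ι ℝ) :
    (∀ v : ι → ℝ, Tendsto (fun a => M a *ᵥ v) l (𝓝 0)) ↔
      ∀ w : ι → ℂ, Tendsto (fun a => (M a).map ofReal *ᵥ w) l (𝓝 0) := by
  have hof : Tendsto (fun v : ι → ℝ => fun i => (v i : ℂ)) (𝓝 0) (𝓝 0) :=
    Continuous.tendsto' (by fun_prop) 0 0 (by simp [Pi.zero_def])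
  have hre : Tendsto (fun w : ι → ℂ => fun i => (w i).re) (𝓝 0) (𝓝 0) :=
    Continuous.tendsto' (by fun_prop) 0 0 (by simp [Pi.zero_def])
  constructor
  · intro h w
    have hpart (v : ι → ℝ) : Tendsto (fun a => fun i => ((M a *ᵥ v) i : ℂ)) l (𝓝 0) :=
      hof.comp (h v)
    rw [← Pi.ofReal_re_add_I_smul_ofReal_im w]
    simpa [mulVec_add, mulVec_smul, map_ofReal_mulVec] using
      (hpart _).add ((hpart _).const_smul I)
  · intro h v
    simpa [map_ofReal_mulVec, Function.comp_def] using hre.comp (h fun j => (v j : ℂ))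

theorem exp_map_ofReal [DecidableEq ι] (A : Matrix ι ι ℝ) :
    (exp A).map ofReal = exp (A.map ofReal) := by
  open scoped Norms.Operator in
  exact map_exp ofRealHom.mapMatrix (continuous_id.matrix_map continuous_ofReal) A

end Complexification

variable [DecidableEq ι]

theorem forall_tendsto_toEuclideanLin_iff {𝕜 α : Type*} [RCLike 𝕜] {l : Filter α}
    (M : α → Matrix ι ι 𝕜) :
    (∀ v : EuclideanSpace 𝕜 ι, Tendsto (fun a => toEuclideanLin (M a) v) l (𝓝 0)) ↔
      ∀ v : ι → 𝕜, Tendsto (fun a => M a *ᵥ v) l (𝓝 0) :=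
  ⟨fun h v => ((PiLp.continuous_ofLp 2 _).tendsto 0).comp (h (WithLp.toLp 2 v)),
    fun h v => ((PiLp.continuous_toLp 2 _).tendsto 0).comp (h (WithLp.ofLp v))⟩

theorem exp_mulVec_of_pow_mulVec_eq_zero {𝕂 : Type*} [RCLike 𝕂] {N : Matrix ι ι 𝕂}
    {w : ι → 𝕂} {k : ℕ} (hk : N ^ k *ᵥ w = 0) :
    exp N *ᵥ w = ∑ j ∈ Finset.range k, (j !⁻¹ : 𝕂) • (N ^ j *ᵥ w) := by
  have hsum : HasSum (fun j => (j !⁻¹ : 𝕂) • (N ^ j *ᵥ w)) (exp N *ᵥ w) := by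
    open scoped Norms.Operator in
    have := (exp_series_hasSum_exp' (𝕂 := 𝕂) N).map
      (mulVec.addMonoidHomLeft w) (continuous_id.matrix_mulVec continuous_const)
    convert this using 1
    · ext j : 1
      simp [mulVec.addMonoidHomLeft, smul_mulVec]
    · rfl
  refine hsum.unique (hasSum_sum_of_ne_finset_zero fun j hj => ?_)
  obtain ⟨i, rfl⟩ := Nat.exists_eq_add_of_le' (by simpa using hj)
  simp [pow_add, ← mulVec_mulVec, hk]

theorem exp_smul_mulVec_of_pow_sub_mulVec_eq_zero {A : Matrix ι ι ℂ} {μ : ℂ} {w : ι → ℂ}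
    {k : ℕ} (hk : (A - μ • 1) ^ k *ᵥ w = 0) (z : ℂ) :
    exp (z • A) *ᵥ w = Complex.exp (z * μ) •
      ∑ j ∈ Finset.range k, (z ^ j * (j !⁻¹ : ℂ)) • ((A - μ • 1) ^ j *ᵥ w) := by
  set N := A - μ • (1 : Matrix ι ι ℂ)
  have hsplit : z • A = algebraMap ℂ _ (z * μ) + z • N := by
    simp [N, Algebra.algebraMap_eq_smul_one, smul_sub, smul_smul]
  have hscalar : exp (algebraMap ℂ (Matrix ι ι ℂ) (z * μ)) =
      algebraMap ℂ _ (Complex.exp (z * μ)) := by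
    rw [Complex.exp_eq_exp_ℂ]
    open scoped Norms.Operator in
    exact (map_exp (algebraMap ℂ (Matrix ι ι ℂ)) (continuous_algebraMap ℂ _) _).symm
  rw [hsplit, exp_add_of_commute _ _ (Algebra.commute_algebraMap_left _ _), hscalar,
    Algebra.algebraMap_eq_smul_one, smul_mul_assoc, one_mul, smul_mulVec,
    exp_mulVec_of_pow_mulVec_eq_zero (k := k)]
  · simp [smul_pow, smul_mulVec, smul_smul, mul_comm]
  · rw [smul_pow, smul_mulVec, hk, smul_zero]

theorem tendsto_exp_smul_mulVec_of_pow_sub_mulVec_eq_zero {A : Matrix ι ι ℂ} {μ : ℂ}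
    {w : ι → ℂ} {k : ℕ} (hμ : μ.re < 0) (hk : (A - μ • 1) ^ k *ᵥ w = 0) :
    Tendsto (fun t : ℝ => exp ((t : ℂ) • A) *ᵥ w) atTop (𝓝 0) := by
  simp_rw [exp_smul_mulVec_of_pow_sub_mulVec_eq_zero hk, Finset.smul_sum, smul_smul, ← mul_assoc]
  simpa using tendsto_finsetSum (Finset.range k) fun j _ =>
    ((tendsto_cexp_mul_mul_pow_atTop hμ j).mul_const _).smul_const ((A - μ • 1) ^ j *ᵥ w)

theorem tendsto_exp_smul_mulVec_of_forall_re_neg {A : Matrix ι ι ℂ}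
    (h : ∀ μ ∈ spectrum ℂ A, μ.re < 0) (w : ι → ℂ) :
    Tendsto (fun t : ℝ => exp ((t : ℂ) • A) *ᵥ w) atTop (𝓝 0) := by
  have hw : w ∈ ⨆ μ, Module.End.maxGenEigenspace (toLin' A) μ := by
    rw [Module.End.iSup_maxGenEigenspace_eq_top]; trivial
  induction hw using Submodule.iSup_induction' with
  | mem μ x hx =>
    rcases eq_or_ne x 0 with rfl | hx0
    · simp
    have hspec : μ ∈ spectrum ℂ A := by
      rw [← spectrum_toLin', ← Module.End.hasUnifEigenvalue_iff_mem_spectrum,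
        ← Module.End.hasUnifEigenvalue_iff_hasUnifEigenvalue_one (k := ⊤) (by simp)]
      exact (Submodule.ne_bot_iff _).2 ⟨x, hx, hx0⟩
    obtain ⟨k, hk⟩ := (Module.End.mem_maxGenEigenspace _ _ _).1 hx
    refine tendsto_exp_smul_mulVec_of_pow_sub_mulVec_eq_zero (h μ hspec) (k := k) ?_
    have hpow : toLin' ((A - μ • 1) ^ k) = (toLin' A - μ • 1) ^ k := by
      simp [Module.End.one_eq_id]
    simpa [← toLin'_apply, hpow] using hk
  | zero => simp
  | add x y _ _ hx hy => simpa [mulVec_add] using hx.add hy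

theorem re_neg_of_forall_tendsto_exp_smul_mulVec {A : Matrix ι ι ℂ}
    (h : ∀ w : ι → ℂ, Tendsto (fun t : ℝ => exp ((t : ℂ) • A) *ᵥ w) atTop (𝓝 0))
    {μ : ℂ} (hμ : μ ∈ spectrum ℂ A) : μ.re < 0 := by
  rw [← spectrum_toLin', ← Module.End.hasEigenvalue_iff_mem_spectrum] at hμ
  obtain ⟨w, hw, hw0⟩ := hμ.exists_hasEigenvector
  have hAw : (A - μ • 1) ^ 1 *ᵥ w = 0 := by
    simpa [sub_mulVec, sub_eq_zero, smul_mulVec] using Module.End.mem_eigenspace_iff.1 hw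
  have htraj (t : ℝ) : exp ((t : ℂ) • A) *ᵥ w = Complex.exp (t * μ) • w := by
    simpa using exp_smul_mulVec_of_pow_sub_mulVec_eq_zero hAw t
  by_contra! hre
  have hlim := (h w).norm
  rw [norm_zero] at hlim
  refine hw0 (norm_le_zero_iff.1 (ge_of_tendsto hlim ?_))
  filter_upwards [eventually_ge_atTop 0] with t ht
  rw [htraj, norm_smul, Complex.norm_exp, Complex.re_ofReal_mul]
  exact le_mul_of_one_le_left (norm_nonneg w) (Real.one_le_exp (mul_nonneg ht hre))

theorem forall_re_neg_iff_forall_tendsto_exp_smul_mulVec (A : Matrix ι ι ℂ) :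
    (∀ μ ∈ spectrum ℂ A, μ.re < 0) ↔
      ∀ w : ι → ℂ, Tendsto (fun t : ℝ => exp ((t : ℂ) • A) *ᵥ w) atTop (𝓝 0) :=
  ⟨tendsto_exp_smul_mulVec_of_forall_re_neg,
    fun h _ => re_neg_of_forall_tendsto_exp_smul_mulVec h⟩

end Matrix

/-- Every complex eigenvalue of the real matrix `J` has strictly negative real part
iff every trajectory `t ↦ exp (t J) ⬝ v` of the linear system converges to `0` as `t → ∞`. -/
theorem eigenvalues_re_neg_iff_forall_tendsto_zero {n : ℕ} (J : Matrix (Fin n) (Fin n) ℝ) :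
    (∀ μ ∈ spectrum ℂ (J.map (Complex.ofReal : ℝ → ℂ)), μ.re < 0) ↔
      ∀ v : EuclideanSpace ℝ (Fin n),
        Filter.Tendsto (fun t : ℝ => Matrix.toEuclideanLin (NormedSpace.exp (t • J)) v)
          Filter.atTop (nhds 0) := by
  have hexp (t : ℝ) :
      (exp (t • J)).map Complex.ofReal = exp ((t : ℂ) • J.map Complex.ofReal) := by
    rw [exp_map_ofReal]
    congr 1
    ext
    simp
  rw [forall_re_neg_iff_forall_tendsto_exp_smul_mulVec, forall_tendsto_toEuclideanLin_iff,
    forall_tendsto_mulVec_iff_forall_tendsto_map_ofReal_mulVec]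
  simp_rw [hexp]
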